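/- For every compact set K ⊂ Γ and every β ∈ (0, √2), there exists a constant ε > 0, depending only on β, K, f and Γ, such that for every t ∈ [0,1], every μ ∈ K and every λ ∈ Γ_t with |ν_{t,μ} − ν_{t,λ}| > β, one has ∇f_t(λ) · (μ − λ) ≥ f_t(μ) − f_t(λ) + ε Σ_{i=1}^n ∂f_t/∂λ_i(λ) + ε. -/

import Mathlib

open Real Set Filter

/-- The deformed function f_t(λ) = f(tλ + (1−t)σ₁(λ)e). -/
noncomputable def ftFun {n : ℕ} (f : EuclideanSpace ℝ (Fin n) → ℝ) (t : ℝ)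
    (x : EuclideanSpace ℝ (Fin n)) : ℝ :=
  f (WithLp.toLp 2 (fun i => t * x i + (1 - t) * ∑ j, x j))

/-- The normalized gradient ν_{t,λ} = ∇f_t(λ)/|∇f_t(λ)|. -/
noncomputable def nuFun {n : ℕ} (f : EuclideanSpace ℝ (Fin n) → ℝ) (t : ℝ)
    (x : EuclideanSpace ℝ (Fin n)) : EuclideanSpace ℝ (Fin n) :=
  ‖gradient (ftFun f t) x‖⁻¹ • gradient (ftFun f t) x

/-! ### Auxiliary definitions and lemmas -/

noncomputable def onev (n : ℕ) : EuclideanSpace ℝ (Fin n) := WithLp.toLp 2 (fun _ => 1)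

noncomputable def linCLM (n : ℕ) (t : ℝ) :
    EuclideanSpace ℝ (Fin n) →L[ℝ] EuclideanSpace ℝ (Fin n) :=
  t • ContinuousLinearMap.id ℝ _ +
    (1 - t) • ((∑ i, EuclideanSpace.proj i).smulRight (onev n))

lemma linCLM_apply {n : ℕ} (t : ℝ) (x : EuclideanSpace ℝ (Fin n)) :
    linCLM n t x = WithLp.toLp 2 (fun i => t * x i + (1 - t) * ∑ j, x j) := by
  ext i
  simp [linCLM, onev, ContinuousLinearMap.sum_apply, PiLp.add_apply, PiLp.smul_apply,
    smul_eq_mul]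

lemma linCLM_apply' {n : ℕ} (t : ℝ) (x : EuclideanSpace ℝ (Fin n)) :
    linCLM n t x = t • x + ((1 - t) * ∑ j, x j) • (onev n) := by
  rw [linCLM_apply]
  ext i
  simp [onev, PiLp.add_apply, PiLp.smul_apply, smul_eq_mul]

lemma ftFun_eq {n : ℕ} (f : EuclideanSpace ℝ (Fin n) → ℝ) (t : ℝ)
    (x : EuclideanSpace ℝ (Fin n)) : ftFun f t x = f (linCLM n t x) := by
  rw [ftFun, linCLM_apply]

lemma ftFun_funeq {n : ℕ} (f : EuclideanSpace ℝ (Fin n) → ℝ) (t : ℝ) :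
    ftFun f t = f ∘ (linCLM n t) := funext fun x => ftFun_eq f t x

/-- one-sided slope bound gives derivative upper bound -/
lemma deriv_le_of_slope {n : ℕ} (g : EuclideanSpace ℝ (Fin n) → ℝ)
    {x v : EuclideanSpace ℝ (Fin n)} {D : EuclideanSpace ℝ (Fin n) →L[ℝ] ℝ}
    (hD : HasFDerivAt g D x) {c : ℝ}
    (h : ∀ᶠ s in nhdsWithin (0:ℝ) (Ioi 0), g (x + s • v) - g x ≤ s * c) : D v ≤ c := by
  have hline : HasDerivAt (fun s : ℝ => x + s • v) v 0 := by
    simpa using ((hasDerivAt_id (0:ℝ)).smul_const v).const_add x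
  have hφ : HasDerivAt (fun s : ℝ => g (x + s • v)) (D v) 0 := by
    have hD' : HasFDerivAt g D (x + (0:ℝ) • v) := by simpa using hD
    exact hD'.comp_hasDerivAt (x := (0:ℝ)) hline
  have hslope := hasDerivAt_iff_tendsto_slope.1 hφ
  have hmono : nhdsWithin (0:ℝ) (Ioi 0) ≤ nhdsWithin (0:ℝ) {(0:ℝ)}ᶜ :=
    nhdsWithin_mono _ (fun s hs => ne_of_gt hs)
  refine le_of_tendsto (hslope.mono_left hmono) ?_
  filter_upwards [h, self_mem_nhdsWithin] with s hs hs0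
  have hs0' : (0:ℝ) < s := hs0
  rw [slope_def_field]
  simp only [sub_zero]
  rw [div_le_iff₀ hs0']
  simpa [mul_comm] using hs

/-- one-sided slope bound gives derivative lower bound -/
lemma le_deriv_of_slope {n : ℕ} (g : EuclideanSpace ℝ (Fin n) → ℝ)
    {x v : EuclideanSpace ℝ (Fin n)} {D : EuclideanSpace ℝ (Fin n) →L[ℝ] ℝ}
    (hD : HasFDerivAt g D x) {c : ℝ}
    (h : ∀ᶠ s in nhdsWithin (0:ℝ) (Ioi 0), s * c ≤ g (x + s • v) - g x) : c ≤ D v := by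
  have hline : HasDerivAt (fun s : ℝ => x + s • v) v 0 := by
    simpa using ((hasDerivAt_id (0:ℝ)).smul_const v).const_add x
  have hφ : HasDerivAt (fun s : ℝ => g (x + s • v)) (D v) 0 := by
    have hD' : HasFDerivAt g D (x + (0:ℝ) • v) := by simpa using hD
    exact hD'.comp_hasDerivAt (x := (0:ℝ)) hline
  have hslope := hasDerivAt_iff_tendsto_slope.1 hφ
  have hmono : nhdsWithin (0:ℝ) (Ioi 0) ≤ nhdsWithin (0:ℝ) {(0:ℝ)}ᶜ :=
    nhdsWithin_mono _ (fun s hs => ne_of_gt hs)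
  refine ge_of_tendsto (hslope.mono_left hmono) ?_
  filter_upwards [h, self_mem_nhdsWithin] with s hs hs0
  have hs0' : (0:ℝ) < s := hs0
  rw [slope_def_field]
  simp only [sub_zero]
  rw [le_div_iff₀ hs0']
  simpa [mul_comm] using hs

/-- concave differentiable function lies below its tangent -/
lemma concave_tangent {n : ℕ} {s : Set (EuclideanSpace ℝ (Fin n))}
    {g : EuclideanSpace ℝ (Fin n) → ℝ} (hg : ConcaveOn ℝ s g)
    {x y : EuclideanSpace ℝ (Fin n)} (hx : x ∈ s) (hy : y ∈ s)
    {D : EuclideanSpace ℝ (Fin n) →L[ℝ] ℝ} (hD : HasFDerivAt g D x) :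
    g y ≤ g x + D (y - x) := by
  have key : g y - g x ≤ D (y - x) := by
    refine le_deriv_of_slope g hD ?_
    filter_upwards [Ioo_mem_nhdsGT_of_mem (Set.mem_Ico.2 ⟨le_refl (0:ℝ), one_pos⟩)]
      with r hr
    have h1 : g ((1 - r) • x + r • y) ≥ (1 - r) * g x + r * g y :=
      hg.2 hx hy (by linarith [hr.1.le, hr.2.le]) hr.1.le (by ring)
    have h2 : x + r • (y - x) = (1 - r) • x + r • y := by
      rw [smul_sub, sub_smul, one_smul]; abel
    rw [h2]; nlinarith [h1]
  linarith

/-- Euler identity for 1-homogeneous differentiable functions -/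
lemma euler_identity {n : ℕ} {g : EuclideanSpace ℝ (Fin n) → ℝ}
    {x : EuclideanSpace ℝ (Fin n)}
    (hhom : ∀ s : ℝ, 0 < s → g (s • x) = s * g x)
    {D : EuclideanSpace ℝ (Fin n) →L[ℝ] ℝ} (hD : HasFDerivAt g D x) :
    D x = g x := by
  have hline : HasDerivAt (fun s : ℝ => s • x) x 1 := by
    simpa using (hasDerivAt_id (1:ℝ)).smul_const x
  have hφ : HasDerivAt (fun s : ℝ => g (s • x)) (D x) 1 := by
    have hD' : HasFDerivAt g D ((1:ℝ) • x) := by simpa using hD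
    exact hD'.comp_hasDerivAt (x := (1:ℝ)) hline
  have heq : (fun s : ℝ => g (s • x)) =ᶠ[nhds 1] (fun s : ℝ => s * g x) := by
    filter_upwards [Ioi_mem_nhds (zero_lt_one (α := ℝ))] with s hs
    exact hhom s hs
  have hφ' : HasDerivAt (fun s : ℝ => s * g x) (D x) 1 := hφ.congr_of_eventuallyEq heq.symm
  have hψ : HasDerivAt (fun s : ℝ => s * g x) (g x) 1 := by
    simpa using (hasDerivAt_id (1:ℝ)).mul_const (g x)
  exact hφ'.unique hψ

set_option maxHeartbeats 3000000 in
/-- For every compact K ⊂ Γ and every β ∈ (0, √2), there exists ε > 0, depending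
only on β, K, f and Γ, such that for every t ∈ [0,1], μ ∈ K and λ ∈ Γ_t with
|ν_{t,μ} − ν_{t,λ}| > β, one has
∇f_t(λ)·(μ − λ) ≥ f_t(μ) − f_t(λ) + ε Σ_i ∂f_t/∂λ_i(λ) + ε. -/
theorem guan_type_lemma
    {n : ℕ} (hn : 2 ≤ n)
    (Γ : Set (EuclideanSpace ℝ (Fin n)))
    (hΓ_open : IsOpen Γ)
    (hΓ_convex : Convex ℝ Γ)
    (hΓ_cone : ∀ s : ℝ, 0 < s → ∀ x ∈ Γ, s • x ∈ Γ)
    (hΓ_symm : ∀ σ : Equiv.Perm (Fin n), ∀ x ∈ Γ, (WithLp.toLp 2 (fun i => x (σ i))) ∈ Γ)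
    (hΓn : {x : EuclideanSpace ℝ (Fin n) | ∀ i, 0 < x i} ⊆ Γ)
    (hΓ1 : Γ ⊆ {x : EuclideanSpace ℝ (Fin n) | 0 < ∑ i, x i})
    (f : EuclideanSpace ℝ (Fin n) → ℝ)
    (hf_smooth : ContDiffOn ℝ (⊤ : ℕ∞) f Γ)
    (hf_cont : ContinuousOn f (closure Γ))
    (hf_symm : ∀ σ : Equiv.Perm (Fin n), ∀ x ∈ Γ, f (WithLp.toLp 2 (fun i => x (σ i))) = f x)
    (hf1_pos : ∀ x ∈ Γ, 0 < f x)
    (hf1_bd : ∀ x ∈ frontier Γ, f x = 0)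
    (hf2 : ∀ x ∈ Γ, ∀ i, 0 < fderiv ℝ f x (EuclideanSpace.single i 1))
    (hf3 : ConcaveOn ℝ Γ f)
    (hf4 : ∀ s : ℝ, 0 < s → ∀ x ∈ Γ, f (s • x) = s * f x)
    (e : EuclideanSpace ℝ (Fin n)) (he : e = WithLp.toLp 2 (fun _ => 1)) :
    ∀ K : Set (EuclideanSpace ℝ (Fin n)), IsCompact K → K ⊆ Γ →
      ∀ β : ℝ, 0 < β → β < Real.sqrt 2 →
        ∃ ε : ℝ, 0 < ε ∧
          ∀ t ∈ Icc (0 : ℝ) 1, ∀ μ ∈ K, ∀ x : EuclideanSpace ℝ (Fin n),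
            (t • x + ((1 - t) * ∑ i, x i) • e) ∈ Γ →
            β < ‖nuFun f t μ - nuFun f t x‖ →
            ftFun f t μ - ftFun f t x + ε * (∑ i, gradient (ftFun f t) x i) + ε ≤
              ∑ i, gradient (ftFun f t) x i * (μ i - x i) := by
  intro K hKcomp hKΓ β hβ0 _hβ2
  classical
  rcases K.eq_empty_or_nonempty with rfl | hKne
  · exact ⟨1, one_pos, fun t _ μ hμ => absurd hμ (Set.notMem_empty μ)⟩
  -- Fin n is nonempty
  haveI : NeZero n := ⟨by omega⟩
  have hFinNe : (Finset.univ : Finset (Fin n)).Nonempty := Finset.univ_nonempty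
  -- membership of the deformation
  have hmemΓ : ∀ t ∈ Icc (0:ℝ) 1, ∀ y ∈ Γ, linCLM n t y ∈ Γ := by
    intro t ht y hy
    have hσ : 0 < ∑ j, y j := hΓ1 hy
    have hz : ((∑ j, y j) • (onev n)) ∈ Γ := by
      apply hΓn
      intro i
      simpa [onev] using hσ
    have h2 : linCLM n t y = t • y + (1 - t) • ((∑ j, y j) • onev n) := by
      rw [linCLM_apply', smul_smul]
    rw [h2]
    exact hΓ_convex hy hz ht.1 (by linarith [ht.2]) (by ring)
  -- differentiability
  have hdiff : ∀ (t : ℝ) (x : EuclideanSpace ℝ (Fin n)), linCLM n t x ∈ Γ →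
      HasFDerivAt (ftFun f t) ((fderiv ℝ f (linCLM n t x)).comp (linCLM n t)) x := by
    intro t x hx
    have hfd : HasFDerivAt f (fderiv ℝ f (linCLM n t x)) (linCLM n t x) :=
      ((hf_smooth.contDiffAt (hΓ_open.mem_nhds hx)).differentiableAt (by simp)).hasFDerivAt
    have := hfd.comp x (linCLM n t).hasFDerivAt
    rw [ftFun_funeq f t]
    exact this
  have hgrad : ∀ (t : ℝ) (x : EuclideanSpace ℝ (Fin n)), linCLM n t x ∈ Γ →
      gradient (ftFun f t) x =
        (InnerProductSpace.toDual ℝ _).symm ((fderiv ℝ f (linCLM n t x)).comp (linCLM n t)) :=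
    fun t x hx => ((hdiff t x hx).hasGradientAt).gradient
  have hinner : ∀ (t : ℝ) (x : EuclideanSpace ℝ (Fin n)), linCLM n t x ∈ Γ →
      ∀ v : EuclideanSpace ℝ (Fin n),
      (inner ℝ (gradient (ftFun f t) x) v : ℝ) =
        (fderiv ℝ f (linCLM n t x)).comp (linCLM n t) v := by
    intro t x hx v
    rw [hgrad t x hx]
    exact InnerProductSpace.toDual_symm_apply
  -- real inner product as a sum
  have hip : ∀ (g v : EuclideanSpace ℝ (Fin n)), (inner ℝ g v : ℝ) = ∑ i, g i * v i := by
    intro g v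
    simp [PiLp.inner_apply, mul_comm]
  -- the vector of ones as a sum of basis vectors
  have honev : (onev n) = ∑ i, EuclideanSpace.single i (1:ℝ) := by
    ext j
    rw [WithLp.ofLp_sum, Finset.sum_apply]
    simp [onev, EuclideanSpace.single_apply]
  -- image of a basis vector
  have hsingle : ∀ (t : ℝ) (i : Fin n), linCLM n t (EuclideanSpace.single i 1) =
      t • EuclideanSpace.single i (1:ℝ) + (1 - t) • onev n := by
    intro t i
    rw [linCLM_apply]
    ext j
    simp [EuclideanSpace.single_apply, onev, PiLp.add_apply, PiLp.smul_apply, smul_eq_mul]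
  -- positivity of the coordinates of the gradient
  have hpos : ∀ t ∈ Icc (0:ℝ) 1, ∀ x : EuclideanSpace ℝ (Fin n), linCLM n t x ∈ Γ →
      ∀ i, 0 < gradient (ftFun f t) x i := by
    intro t ht x hx i
    have e1 : (inner ℝ (gradient (ftFun f t) x) (EuclideanSpace.single i (1:ℝ)) : ℝ)
        = gradient (ftFun f t) x i := by
      rw [hip]
      simp [EuclideanSpace.single_apply]
    rw [← e1, hinner t x hx]
    have e2 : (fderiv ℝ f (linCLM n t x)).comp (linCLM n t) (EuclideanSpace.single i 1)
        = t * fderiv ℝ f (linCLM n t x) (EuclideanSpace.single i 1)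
          + (1 - t) * fderiv ℝ f (linCLM n t x) (onev n) := by
      rw [ContinuousLinearMap.comp_apply, hsingle t i, map_add, map_smul, map_smul]
      simp
    have e3 : fderiv ℝ f (linCLM n t x) (onev n)
        = ∑ j, fderiv ℝ f (linCLM n t x) (EuclideanSpace.single j 1) := by
      rw [honev, map_sum]
    have ha : 0 < fderiv ℝ f (linCLM n t x) (EuclideanSpace.single i 1) := hf2 _ hx i
    have hb : 0 < fderiv ℝ f (linCLM n t x) (onev n) := by
      rw [e3]
      exact Finset.sum_pos (fun j _ => hf2 _ hx j) hFinNe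
    rw [e2]
    set a := fderiv ℝ f (linCLM n t x) (EuclideanSpace.single i 1) with ha'
    set b := fderiv ℝ f (linCLM n t x) (onev n) with hb'
    have hmin : 0 < min a b := lt_min ha hb
    have h1 : t * a ≥ t * min a b := mul_le_mul_of_nonneg_left (min_le_left _ _) ht.1
    have h2 : (1 - t) * b ≥ (1 - t) * min a b :=
      mul_le_mul_of_nonneg_left (min_le_right _ _) (by linarith [ht.2])
    have h3 : t * min a b + (1 - t) * min a b = min a b := by ring
    linarith
  -- the deformation as a continuous map on pairs
  set ℓ : ℝ × EuclideanSpace ℝ (Fin n) → EuclideanSpace ℝ (Fin n) :=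
    fun z => linCLM n z.1 z.2 with hℓdef
  have hℓcont : Continuous ℓ := by
    have h1 : ℓ = fun z : ℝ × EuclideanSpace ℝ (Fin n) =>
        z.1 • z.2 + ((1 - z.1) * ∑ j, z.2 j) • onev n := funext fun z => linCLM_apply' _ _
    rw [h1]
    have hsum : Continuous fun z : ℝ × EuclideanSpace ℝ (Fin n) => ∑ j, z.2 j :=
      continuous_finset_sum _ fun j _ => (EuclideanSpace.proj j).continuous.comp continuous_snd
    exact (continuous_fst.smul continuous_snd).add
      (((continuous_const.sub continuous_fst).mul hsum).smul continuous_const)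
  set Ω : Set (ℝ × EuclideanSpace ℝ (Fin n)) := ℓ ⁻¹' Γ with hΩdef
  have hFeq : (fun z : ℝ × EuclideanSpace ℝ (Fin n) => ftFun f z.1 z.2) = f ∘ ℓ :=
    funext fun z => ftFun_eq f z.1 z.2
  have hFcont : ContinuousOn (fun z : ℝ × EuclideanSpace ℝ (Fin n) => ftFun f z.1 z.2) Ω := by
    rw [hFeq]
    exact (hf_smooth.continuousOn).comp hℓcont.continuousOn (fun z hz => hz)
  have hclmcont : Continuous (fun t : ℝ => linCLM n t) := by
    unfold linCLM
    exact (continuous_id.smul continuous_const).add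
      ((continuous_const.sub continuous_id).smul continuous_const)
  set Gm : ℝ × EuclideanSpace ℝ (Fin n) → EuclideanSpace ℝ (Fin n) := fun z =>
    (InnerProductSpace.toDual ℝ _).symm ((fderiv ℝ f (ℓ z)).comp (linCLM n z.1)) with hGmdef
  have hGmeq : ∀ (t : ℝ) (x : EuclideanSpace ℝ (Fin n)), linCLM n t x ∈ Γ →
      gradient (ftFun f t) x = Gm (t, x) := fun t x hx => hgrad t x hx
  have hGmcont : ContinuousOn Gm Ω := by
    have hdf : ContinuousOn (fderiv ℝ f) Γ :=
      hf_smooth.continuousOn_fderiv_of_isOpen hΓ_open (by exact_mod_cast le_top)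
    have h1 : ContinuousOn (fun z : ℝ × EuclideanSpace ℝ (Fin n) => fderiv ℝ f (ℓ z)) Ω :=
      hdf.comp hℓcont.continuousOn (fun z hz => hz)
    have h2 : ContinuousOn (fun z : ℝ × EuclideanSpace ℝ (Fin n) =>
        (fderiv ℝ f (ℓ z)).comp (linCLM n z.1)) Ω :=
      h1.clm_comp ((hclmcont.comp continuous_fst).continuousOn)
    exact (InnerProductSpace.toDual ℝ _).symm.continuous.comp_continuousOn h2
  set P : Set (ℝ × EuclideanSpace ℝ (Fin n)) := Icc (0:ℝ) 1 ×ˢ K with hPdef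
  have hPsub : P ⊆ Ω := fun z hz => hmemΓ z.1 hz.1 z.2 (hKΓ hz.2)
  have hPcomp : IsCompact P := isCompact_Icc.prod hKcomp
  have hPne : P.Nonempty := ⟨(0, hKne.some), ⟨⟨le_refl 0, zero_le_one⟩, hKne.some_mem⟩⟩
  obtain ⟨zM, hzMP, hzMmax⟩ := hPcomp.exists_isMaxOn hPne (hFcont.mono hPsub)
  set M := ftFun f zM.1 zM.2 with hMdef
  have hM : ∀ z ∈ P, ftFun f z.1 z.2 ≤ M := fun z hz => hzMmax hz
  have hM0 : 0 < M := by
    rw [hMdef, ftFun_eq]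
    exact hf1_pos _ (hPsub hzMP)
  obtain ⟨δ₀, hδ₀, hthick⟩ := hKcomp.exists_cthickening_subset_open hΓ_open hKΓ
  have hball : ∀ μ ∈ K, ∀ w : EuclideanSpace ℝ (Fin n), ‖w‖ ≤ δ₀ → μ + w ∈ Γ := by
    intro μ hμ w hw
    apply hthick
    apply Metric.mem_cthickening_of_dist_le (μ + w) μ δ₀ K hμ
    rw [dist_eq_norm, add_sub_cancel_left]
    exact hw
  set R : ℝ := 2 * (M + 1) / δ₀ with hRdef
  have hR0 : 0 < R := div_pos (by linarith) hδ₀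
  have hGmne : ∀ z ∈ P, Gm z ≠ 0 := by
    intro z hz h0
    have h1 := hpos z.1 hz.1 z.2 (hPsub hz) ⟨0, by omega⟩
    have h2 := hGmeq z.1 z.2 (hPsub hz)
    simp only [Prod.mk.eta] at h2
    rw [h2, h0] at h1
    simp at h1
  set nuG : ℝ × EuclideanSpace ℝ (Fin n) → EuclideanSpace ℝ (Fin n) :=
    fun z => ‖Gm z‖⁻¹ • Gm z with hnuGdef
  have hnucont : ContinuousOn nuG P :=
    ((hGmcont.mono hPsub).norm.inv₀ (fun z hz => norm_ne_zero_iff.2 (hGmne z hz))).smul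
      (hGmcont.mono hPsub)
  -- the compact set of admissible supergradient triples
  set A : EuclideanSpace ℝ (Fin n) →
      Set ((ℝ × EuclideanSpace ℝ (Fin n)) × EuclideanSpace ℝ (Fin n)) :=
    fun y => {z | z.1 ∈ P ∧ ftFun f z.1.1 y ≤ inner ℝ z.2 y} with hAdef
  set B : Set ((ℝ × EuclideanSpace ℝ (Fin n)) × EuclideanSpace ℝ (Fin n)) :=
    {z | z.1 ∈ P ∧ β * ‖z.2‖ ≤ ‖z.2 - ‖z.2‖ • nuG z.1‖} with hBdef
  set S := ((P ×ˢ Metric.closedBall (0:EuclideanSpace ℝ (Fin n)) R) ∩ ⋂ y ∈ Γ, A y) ∩ B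
    with hSdef
  have hPclosed : IsClosed P := isClosed_Icc.prod hKcomp.isClosed
  have hsclosed1 : IsClosed {z : (ℝ × EuclideanSpace ℝ (Fin n)) × EuclideanSpace ℝ (Fin n) |
      z.1 ∈ P} := hPclosed.preimage continuous_fst
  have hAclosed : ∀ y ∈ Γ, IsClosed (A y) := by
    intro y hy
    have hcont : ContinuousOn
        (fun z : (ℝ × EuclideanSpace ℝ (Fin n)) × EuclideanSpace ℝ (Fin n) =>
          (inner ℝ z.2 y : ℝ) - ftFun f z.1.1 y) {z | z.1 ∈ P} := by
      apply ContinuousOn.sub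
      · exact (continuous_snd.inner continuous_const).continuousOn
      · exact hFcont.comp ((continuous_fst.fst.prodMk continuous_const).continuousOn)
          (fun z hz => hmemΓ z.1.1 hz.1 y hy)
    have hset : A y = {z : (ℝ × EuclideanSpace ℝ (Fin n)) × EuclideanSpace ℝ (Fin n) |
        z.1 ∈ P} ∩ (fun z : (ℝ × EuclideanSpace ℝ (Fin n)) × EuclideanSpace ℝ (Fin n) =>
          (inner ℝ z.2 y : ℝ) - ftFun f z.1.1 y) ⁻¹' Ici 0 := by
      ext z
      simp only [hAdef, mem_setOf_eq, mem_inter_iff, mem_preimage, mem_Ici, sub_nonneg]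
    rw [hset]
    exact hcont.preimage_isClosed_of_isClosed hsclosed1 isClosed_Ici
  have hBclosed : IsClosed B := by
    have hcont : ContinuousOn
        (fun z : (ℝ × EuclideanSpace ℝ (Fin n)) × EuclideanSpace ℝ (Fin n) =>
          ‖z.2 - ‖z.2‖ • nuG z.1‖ - β * ‖z.2‖) {z | z.1 ∈ P} := by
      have hnu : ContinuousOn
          (fun z : (ℝ × EuclideanSpace ℝ (Fin n)) × EuclideanSpace ℝ (Fin n) => nuG z.1)
          {z | z.1 ∈ P} := hnucont.comp continuous_fst.continuousOn (fun z hz => hz)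
      exact ((continuous_snd.continuousOn.sub
        ((continuous_snd.norm.continuousOn).smul hnu)).norm).sub
        (continuous_const.mul continuous_snd.norm).continuousOn
    have hset : B = {z : (ℝ × EuclideanSpace ℝ (Fin n)) × EuclideanSpace ℝ (Fin n) |
        z.1 ∈ P} ∩ (fun z : (ℝ × EuclideanSpace ℝ (Fin n)) × EuclideanSpace ℝ (Fin n) =>
          ‖z.2 - ‖z.2‖ • nuG z.1‖ - β * ‖z.2‖) ⁻¹' Ici 0 := by
      ext z
      simp only [hBdef, mem_setOf_eq, mem_inter_iff, mem_preimage, mem_Ici, sub_nonneg]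
    rw [hset]
    exact hcont.preimage_isClosed_of_isClosed hsclosed1 isClosed_Ici
  have hSsub : S ⊆ P ×ˢ Metric.closedBall (0:EuclideanSpace ℝ (Fin n)) R :=
    fun z hz => hz.1.1
  have hScomp : IsCompact S := by
    have hC₀ : IsCompact (P ×ˢ Metric.closedBall (0:EuclideanSpace ℝ (Fin n)) R) :=
      hPcomp.prod (isCompact_closedBall _ _)
    exact hC₀.of_isClosed_subset
      ((((hPclosed.prod Metric.isClosed_closedBall).inter
        (isClosed_biInter (fun y hy => hAclosed y hy))).inter hBclosed)) hSsub
  set θ := fun z : (ℝ × EuclideanSpace ℝ (Fin n)) × EuclideanSpace ℝ (Fin n) =>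
    (inner ℝ z.2 z.1.2 : ℝ) - ftFun f z.1.1 z.1.2 with hθdef
  have hθcont : ContinuousOn θ S := by
    apply ContinuousOn.sub
    · exact (continuous_snd.inner continuous_fst.snd).continuousOn
    · exact hFcont.comp continuous_fst.continuousOn (fun z hz => hPsub (hSsub hz).1)
  -- positivity of θ on S
  have hθpos : ∀ z ∈ S, 0 < θ z := by
    intro z hz
    obtain ⟨⟨hzC, hzA⟩, hzP, hzB⟩ := hz
    set t := z.1.1 with htdef
    set μ := z.1.2 with hμdef
    set p := z.2 with hpdef2
    have htI : t ∈ Icc (0:ℝ) 1 := hzC.1.1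
    have hμK : μ ∈ K := hzC.1.2
    have hμΓ : μ ∈ Γ := hKΓ hμK
    have hlin : linCLM n t μ ∈ Γ := hmemΓ t htI μ hμΓ
    have hA' : ∀ y ∈ Γ, ftFun f t y ≤ inner ℝ p y := by
      intro y hy
      have := mem_iInter₂.1 hzA y hy
      exact this.2
    have h1 : ftFun f t μ ≤ inner ℝ p μ := hA' μ hμΓ
    have hftpos : 0 < ftFun f t μ := by
      rw [ftFun_eq]
      exact hf1_pos _ hlin
    by_contra hle
    push_neg at hle
    have heq : (inner ℝ p μ : ℝ) = ftFun f t μ := le_antisymm (by simpa [hθdef] using hle) h1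
    have hp0 : p ≠ 0 := by
      intro h0
      rw [h0] at heq
      simp at heq
      linarith
    have hDμ := hdiff t μ hlin
    set Dμ := (fderiv ℝ f (linCLM n t μ)).comp (linCLM n t) with hDμdef
    have key : ∀ v : EuclideanSpace ℝ (Fin n), Dμ v ≤ inner ℝ p v := by
      intro v
      refine deriv_le_of_slope _ hDμ ?_
      have hcont2 : Continuous fun s : ℝ => μ + s • v := by fun_prop
      have hev : ∀ᶠ s : ℝ in nhds 0, μ + s • v ∈ Γ := by
        have h3 : ContinuousAt (fun s : ℝ => μ + s • v) 0 := hcont2.continuousAt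
        have h4 : Γ ∈ nhds ((fun s : ℝ => μ + s • v) 0) := by
          simpa using hΓ_open.mem_nhds hμΓ
        exact h3.eventually_mem h4
      filter_upwards [eventually_nhdsWithin_of_eventually_nhds hev] with s hsΓ
      have h5 : ftFun f t (μ + s • v) ≤ inner ℝ p (μ + s • v) := hA' _ hsΓ
      have h6 : (inner ℝ p (μ + s • v) : ℝ) = inner ℝ p μ + s * inner ℝ p v := by
        rw [inner_add_right, real_inner_smul_right]
      rw [h6, heq] at h5
      linarith
    have keyeq : ∀ v : EuclideanSpace ℝ (Fin n), Dμ v = inner ℝ p v := by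
      intro v
      have h7 := key v
      have h8 := key (-v)
      rw [map_neg, inner_neg_right] at h8
      linarith
    have hpGm : Gm (t, μ) = p := by
      apply ext_inner_left ℝ
      intro v
      have h9 : (inner ℝ (Gm (t, μ)) v : ℝ) = Dμ v := by
        rw [← hGmeq t μ hlin]
        exact hinner t μ hlin v
      have h10 : (inner ℝ v (Gm (t, μ)) : ℝ) = Dμ v := by rw [real_inner_comm]; exact h9
      have h11 : (inner ℝ v p : ℝ) = Dμ v := by rw [real_inner_comm]; exact (keyeq v).symm
      rw [h10, h11]
    have hzB2 : β * ‖p‖ ≤ ‖p - ‖p‖ • nuG (t, μ)‖ := by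
      have := hzB
      simpa [hBdef, Prod.mk.eta] using this
    rw [hnuGdef] at hzB2
    simp only [hpGm] at hzB2
    rw [smul_smul, mul_inv_cancel₀ (norm_ne_zero_iff.2 hp0), one_smul, sub_self, norm_zero]
      at hzB2
    have : 0 < β * ‖p‖ := mul_pos hβ0 (norm_pos_iff.2 hp0)
    linarith
  -- positive lower bound for θ on S
  obtain ⟨c, hc0, hcmin⟩ : ∃ c : ℝ, 0 < c ∧ ∀ z ∈ S, c ≤ θ z := by
    rcases S.eq_empty_or_nonempty with hSe | hSne
    · exact ⟨1, one_pos, by simp [hSe]⟩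
    · obtain ⟨z₀, hz₀S, hz₀min⟩ := hScomp.exists_isMinOn hSne hθcont
      exact ⟨θ z₀, hθpos z₀ hz₀S, fun z hz => hz₀min hz⟩
  -- choice of ε
  have hn0 : (0:ℝ) < n := by exact_mod_cast (by omega : 0 < n)
  have hnR1 : 0 < (n:ℝ) * R + 1 := by positivity
  set ε : ℝ := min (min (δ₀ / (2 * n)) 1) (c / ((n:ℝ) * R + 1)) with hεdef
  have hε0 : 0 < ε := lt_min (lt_min (div_pos hδ₀ (by positivity)) one_pos)
    (div_pos hc0 hnR1)
  refine ⟨ε, hε0, ?_⟩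
  intro t ht μ hμ x hxmem hβx
  have hxΓ : linCLM n t x ∈ Γ := by
    have honeve : e = onev n := he
    have hEq : linCLM n t x = t • x + ((1 - t) * ∑ i, x i) • e := by
      rw [linCLM_apply', ← honeve]
    rw [hEq]
    exact hxmem
  have hμΓ : μ ∈ Γ := hKΓ hμ
  have hμlin : linCLM n t μ ∈ Γ := hmemΓ t ht μ hμΓ
  have hPmem : (t, μ) ∈ P := ⟨ht, hμ⟩
  set p := gradient (ftFun f t) x with hp
  set D := (fderiv ℝ f (linCLM n t x)).comp (linCLM n t) with hDdef
  have hDx : HasFDerivAt (ftFun f t) D x := hdiff t x hxΓ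
  have hpin : ∀ v, (inner ℝ p v : ℝ) = D v := fun v => hinner t x hxΓ v
  have hppos : ∀ i, 0 < p i := hpos t ht x hxΓ
  have hp0 : p ≠ 0 := by
    intro h0
    have h1 := hppos ⟨0, by omega⟩
    rw [h0] at h1
    simp at h1
  have hpn0 : 0 < ‖p‖ := norm_pos_iff.2 hp0
  have hEuler : D x = ftFun f t x := by
    refine euler_identity (fun s hs => ?_) hDx
    rw [ftFun_eq, ftFun_eq, map_smul, hf4 s hs _ hxΓ]
  have hconc : ConcaveOn ℝ ((fun y => linCLM n t y) ⁻¹' Γ) (ftFun f t) := by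
    have h2 := hf3.comp_affineMap ((linCLM n t).toLinearMap.toAffineMap)
    have h3 : ftFun f t = f ∘ ((linCLM n t).toLinearMap.toAffineMap) := by
      funext y
      rw [ftFun_eq]
      rfl
    have h4 : ((fun y => linCLM n t y) ⁻¹' Γ)
        = ((linCLM n t).toLinearMap.toAffineMap) ⁻¹' Γ := rfl
    rw [h3, h4]
    exact h2
  have htangent : ∀ y, linCLM n t y ∈ Γ → ftFun f t y ≤ inner ℝ p y := by
    intro y hy
    have h5 := concave_tangent hconc (show x ∈ _ from hxΓ) (show y ∈ _ from hy) hDx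
    rw [map_sub] at h5
    rw [hpin y]
    linarith [hEuler]
  have hgoal_rhs : ∑ i, p i * (μ i - x i) = (inner ℝ p μ : ℝ) - ftFun f t x := by
    have h6 : ∑ i, p i * (μ i - x i) = (inner ℝ p (μ - x) : ℝ) := by
      rw [hip p (μ - x)]
      apply Finset.sum_congr rfl
      intro i _
      congr 1
    rw [h6, inner_sub_right]
    have h7 : (inner ℝ p x : ℝ) = ftFun f t x := by rw [hpin x]; exact hEuler
    rw [h7]
  have hsum_pos : 0 < ∑ i, p i := Finset.sum_pos (fun i _ => hppos i) hFinNe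
  have hcoord : ∀ i, p i ≤ ‖p‖ := by
    intro i
    have h8 : (inner ℝ (EuclideanSpace.single i (1:ℝ)) p : ℝ) = p i := by
      rw [hip]
      simp [EuclideanSpace.single_apply]
    calc p i = inner ℝ (EuclideanSpace.single i (1:ℝ)) p := h8.symm
      _ ≤ ‖EuclideanSpace.single i (1:ℝ)‖ * ‖p‖ := real_inner_le_norm _ _
      _ = ‖p‖ := by rw [EuclideanSpace.norm_single]; simp
  have hsum_le : (∑ i, p i) ≤ (n:ℝ) * ‖p‖ := by
    calc (∑ i, p i) ≤ ∑ _i : Fin n, ‖p‖ := Finset.sum_le_sum (fun i _ => hcoord i)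
      _ = (n:ℝ) * ‖p‖ := by simp [Finset.sum_const, Finset.card_univ, nsmul_eq_mul]
  set ν : EuclideanSpace ℝ (Fin n) := ‖p‖⁻¹ • p with hνdef
  have hν1 : ‖ν‖ = 1 := by
    rw [hνdef, norm_smul, norm_inv, norm_norm, inv_mul_cancel₀ (ne_of_gt hpn0)]
  have hyΓ : μ + (-(δ₀ • ν)) ∈ Γ := by
    apply hball μ hμ
    rw [norm_neg, norm_smul, hν1, mul_one]
    simp [abs_of_pos hδ₀]
  have hinnerν : (inner ℝ p (δ₀ • ν) : ℝ) = δ₀ * ‖p‖ := by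
    rw [real_inner_smul_right, hνdef, real_inner_smul_right, real_inner_self_eq_norm_sq]
    field_simp
  have hIneq1 : δ₀ * ‖p‖ ≤ inner ℝ p μ := by
    have h9 := htangent _ (hmemΓ t ht _ hyΓ)
    have h10 : 0 < ftFun f t (μ + -(δ₀ • ν)) := by
      rw [ftFun_eq]
      exact hf1_pos _ (hmemΓ t ht _ hyΓ)
    have h11 : (inner ℝ p (μ + -(δ₀ • ν)) : ℝ) = inner ℝ p μ - δ₀ * ‖p‖ := by
      rw [inner_add_right, inner_neg_right, hinnerν]
      ring
    rw [h11] at h9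
    linarith
  have hMb : ftFun f t μ ≤ M := hM (t, μ) hPmem
  suffices hkey : ε * (∑ i, p i) + ε ≤ (inner ℝ p μ : ℝ) - ftFun f t μ by
    rw [hgoal_rhs]
    linarith
  by_cases hcase : ‖p‖ ≤ R
  · -- bounded gradient: use the compactness bound
    have hzS : ((t, μ), p) ∈ S := by
      refine ⟨⟨⟨hPmem, mem_closedBall_zero_iff.2 hcase⟩, ?_⟩, hPmem, ?_⟩
      · exact mem_iInter₂.2 fun y hy => ⟨hPmem, htangent y (hmemΓ t ht y hy)⟩
      · have hnux : nuFun f t x = ν := rfl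
        have hnuμ : nuFun f t μ = nuG (t, μ) := by
          rw [nuFun, hGmeq t μ hμlin]
        have h12 : ‖p‖ • (nuFun f t x - nuFun f t μ) = p - ‖p‖ • nuG (t, μ) := by
          rw [smul_sub, hnux, hνdef, smul_smul, mul_inv_cancel₀ (ne_of_gt hpn0), one_smul,
            hnuμ]
        calc β * ‖p‖ ≤ ‖nuFun f t μ - nuFun f t x‖ * ‖p‖ :=
              mul_le_mul_of_nonneg_right (le_of_lt hβx) (norm_nonneg p)
          _ = ‖p‖ * ‖nuFun f t x - nuFun f t μ‖ := by rw [norm_sub_rev]; ring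
          _ = ‖‖p‖ • (nuFun f t x - nuFun f t μ)‖ := by rw [norm_smul, norm_norm]
          _ = ‖p - ‖p‖ • nuG (t, μ)‖ := by rw [h12]
    have hGc : c ≤ (inner ℝ p μ : ℝ) - ftFun f t μ := hcmin _ hzS
    have hε2 : ε ≤ c / ((n:ℝ) * R + 1) := min_le_right _ _
    have h13 : ε * (∑ i, p i) ≤ ε * ((n:ℝ) * R) := by
      apply mul_le_mul_of_nonneg_left _ hε0.le
      calc (∑ i, p i) ≤ (n:ℝ) * ‖p‖ := hsum_le
        _ ≤ (n:ℝ) * R := mul_le_mul_of_nonneg_left hcase (by positivity)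
    have h15 : (c / ((n:ℝ)*R+1)) * ((n:ℝ)*R+1) = c := div_mul_cancel₀ _ (ne_of_gt hnR1)
    nlinarith [hε2, hnR1, hε0]
  · push_neg at hcase
    have hε1 : ε ≤ δ₀ / (2 * n) := (min_le_left _ _).trans (min_le_left _ _)
    have hε1' : ε ≤ 1 := (min_le_left _ _).trans (min_le_right _ _)
    have h13 : ε * (∑ i, p i) ≤ (δ₀ / (2*(n:ℝ))) * ((n:ℝ) * ‖p‖) :=
      mul_le_mul hε1 hsum_le hsum_pos.le (by positivity)
    have h14 : (δ₀ / (2*(n:ℝ))) * ((n:ℝ) * ‖p‖) = (δ₀ / 2) * ‖p‖ := by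
      field_simp
    have h15 : M + 1 ≤ (δ₀ / 2) * ‖p‖ := by
      have h16 : (δ₀ / 2) * R = M + 1 := by
        rw [hRdef]
        field_simp
      nlinarith [hcase, hδ₀]
    linarith
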